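/- In a finite weighted game arena where Player i has a winning strategy, the minimal regret of Player i is at most M·|S|, where M is the maximal edge weight and |S| the number of positions. -/
import Mathlib


open scoped ENat

/-- A strategy maps a finite play (history, current position last) to the chosen
next position. -/
abbrev Strat (S : Type) := List S → S

/-- A two-player turn-based game arena: an ownership function (`true` = Player 1,
`false` = Player 2), an initial position and a transition relation. -/
structure Arena (S : Type) where
  owner : S → Bool
  init : S
  edge : S → S → Prop

namespace Arena

variable {S : Type}

/-- A strategy is valid if it always follows edges of the arena. -/
def Valid (A : Arena S) (σ : Strat S) : Prop :=
  ∀ l : List S, A.edge (l.getLastD A.init) (σ l)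

/-- Combine the strategy `σi` of player `i` with the strategy `σo` of her
opponent into a strategy profile. -/
def pairFor (i : Bool) (σi σo : Strat S) : Bool → Strat S :=
  fun b => if b = i then σi else σo

/-- The prefix of length `n` of the outcome of a strategy profile. -/
def outList (A : Arena S) (σ : Bool → Strat S) : ℕ → List S
  | 0 => [A.init]
  | n + 1 =>
      let l := outList A σ n
      l ++ [σ (A.owner (l.getLastD A.init)) l]

/-- The position reached after `n` rounds. -/
def cur (A : Arena S) (σ : Bool → Strat S) (n : ℕ) : S :=
  (A.outList σ n).getLastD A.init

/-- The total weight of a finite play. -/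
def pathWeight (w : S → S → ℕ) (l : List S) : ℕ :=
  ((l.zip l.tail).map fun p => w p.1 p.2).sum

/-- `n` is the round of the first visit of the outcome to the target set `C`. -/
def firstVisit (A : Arena S) (C : Set S) (σ : Bool → Strat S) (n : ℕ) : Prop :=
  A.cur σ n ∈ C ∧ ∀ m < n, A.cur σ m ∉ C

/-- The utility of a strategy profile w.r.t. edge weights `w` and target set `C`:
the sum of the weights up to the first visit to `C`, and `⊤` if `C` is never
visited. -/
noncomputable def util (A : Arena S) (w : S → S → ℕ) (C : Set S)
    (σ : Bool → Strat S) : ℕ∞ :=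
  ⨅ (n : ℕ) (_ : A.firstVisit C σ n), (pathWeight w (A.outList σ n) : ℕ∞)

/-- A strategy of player `i` is winning if all its outcomes against valid
opposing strategies visit the target set `C`. -/
def Winning (A : Arena S) (C : Set S) (i : Bool) (σi : Strat S) : Prop :=
  ∀ σo : Strat S, A.Valid σo → ∃ n, A.cur (pairFor i σi σo) n ∈ C

/-- Best response value of player `i` against opposing strategy `σo`. -/
noncomputable def br (A : Arena S) (w : S → S → ℕ) (C : Set S)
    (i : Bool) (σo : Strat S) : ℕ∞ :=
  ⨅ (σi : Strat S) (_ : A.Valid σi), A.util w C (pairFor i σi σo)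

end Arena

/-- Regret of utility `u` w.r.t. best-response value `b`, with the convention
`⊤ - ⊤ = ⊤`. -/
noncomputable def regPairVal (u b : ℕ∞) : ℕ∞ := if u = ⊤ then ⊤ else u - b

namespace Arena

variable {S : Type}

/-- The regret of strategy `σi` of player `i`. -/
noncomputable def regOf (A : Arena S) (w : S → S → ℕ) (C : Set S)
    (i : Bool) (σi : Strat S) : ℕ∞ :=
  ⨆ (σo : Strat S) (_ : A.Valid σo),
    regPairVal (A.util w C (pairFor i σi σo)) (A.br w C i σo)

/-- The minimal regret of player `i`. -/
noncomputable def regMin (A : Arena S) (w : S → S → ℕ) (C : Set S) (i : Bool) : ℕ∞ :=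
  ⨅ (σi : Strat S) (_ : A.Valid σi), A.regOf w C i σi

end Arena

namespace Arena

variable {S : Type}

-- AUXILIARY DEVELOPMENT

def attr (A : Arena S) (C : Set S) (i : Bool) : ℕ → Set S
  | 0 => C
  | k + 1 => A.attr C i k ∪ {s | if A.owner s = i
        then ∃ t, A.edge s t ∧ t ∈ A.attr C i k
        else ∀ t, A.edge s t → t ∈ A.attr C i k}

lemma attr_succ_def (A : Arena S) (C : Set S) (i : Bool) (k : ℕ) :
    A.attr C i (k + 1) = A.attr C i k ∪ {s | if A.owner s = i
        then ∃ t, A.edge s t ∧ t ∈ A.attr C i k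
        else ∀ t, A.edge s t → t ∈ A.attr C i k} := rfl

lemma attr_le_succ (A : Arena S) (C : Set S) (i : Bool) (k : ℕ) :
    A.attr C i k ⊆ A.attr C i (k + 1) := Set.subset_union_left

lemma attr_mono (A : Arena S) (C : Set S) (i : Bool) {k m : ℕ} (h : k ≤ m) :
    A.attr C i k ⊆ A.attr C i m := by
  induction h with
  | refl => exact subset_rfl
  | step h ih => exact ih.trans (A.attr_le_succ C i _)

def attrInf (A : Arena S) (C : Set S) (i : Bool) : Set S := {s | ∃ k, s ∈ A.attr C i k}

noncomputable def rank (A : Arena S) (C : Set S) (i : Bool) (s : S) : ℕ :=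
  sInf {k | s ∈ A.attr C i k}

lemma mem_attr_rank {A : Arena S} {C : Set S} {i : Bool} {s : S}
    (h : s ∈ A.attrInf C i) : s ∈ A.attr C i (A.rank C i s) := Nat.sInf_mem h

lemma rank_le {A : Arena S} {C : Set S} {i : Bool} {s : S} {k : ℕ}
    (h : s ∈ A.attr C i k) : A.rank C i s ≤ k := Nat.sInf_le h

lemma step_own {A : Arena S} {C : Set S} {i : Bool} {s : S}
    (h : s ∈ A.attrInf C i) (h0 : A.rank C i s ≠ 0) (ho : A.owner s = i) :
    ∃ t, A.edge s t ∧ t ∈ A.attr C i (A.rank C i s - 1) := by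
  have hm := mem_attr_rank h
  obtain ⟨k, hk⟩ : ∃ k, A.rank C i s = k + 1 := ⟨A.rank C i s - 1, by omega⟩
  rw [hk] at hm
  rcases hm with hm | hm
  · exact absurd (rank_le hm) (by omega)
  · simp only [Set.mem_setOf_eq, ho, if_true] at hm
    rw [hk]
    simpa using hm

lemma step_opp {A : Arena S} {C : Set S} {i : Bool} {s : S}
    (h : s ∈ A.attrInf C i) (h0 : A.rank C i s ≠ 0) (ho : ¬ A.owner s = i) :
    ∀ t, A.edge s t → t ∈ A.attr C i (A.rank C i s - 1) := by
  have hm := mem_attr_rank h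
  obtain ⟨k, hk⟩ : ∃ k, A.rank C i s = k + 1 := ⟨A.rank C i s - 1, by omega⟩
  rw [hk] at hm
  rcases hm with hm | hm
  · exact absurd (rank_le hm) (by omega)
  · simp only [Set.mem_setOf_eq, ho, if_false] at hm
    rw [hk]
    simpa using hm

open Classical in
noncomputable def attrStrat (A : Arena S) (C : Set S) (i : Bool)
    (d : ∀ s : S, ∃ t, A.edge s t) : Strat S := fun l =>
  if h : ∃ t, A.edge (l.getLastD A.init) t ∧
      t ∈ A.attr C i (A.rank C i (l.getLastD A.init) - 1) then h.choose
  else (d (l.getLastD A.init)).choose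

lemma attrStrat_valid (A : Arena S) (C : Set S) (i : Bool)
    (d : ∀ s : S, ∃ t, A.edge s t) : A.Valid (A.attrStrat C i d) := by
  intro l
  rw [attrStrat]
  split
  · next h => exact h.choose_spec.1
  · exact (d _).choose_spec

open Classical in
noncomputable def spoil (A : Arena S) (C : Set S) (i : Bool)
    (d : ∀ s : S, ∃ t, A.edge s t) : Strat S := fun l =>
  if h : ∃ t, A.edge (l.getLastD A.init) t ∧ t ∉ A.attrInf C i then h.choose
  else (d (l.getLastD A.init)).choose

lemma spoil_valid (A : Arena S) (C : Set S) (i : Bool)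
    (d : ∀ s : S, ∃ t, A.edge s t) : A.Valid (A.spoil C i d) := by
  intro l
  rw [spoil]
  split
  · next h => exact h.choose_spec.1
  · exact (d _).choose_spec

lemma trap_own {A : Arena S} {C : Set S} {i : Bool} {s t : S}
    (hs : s ∉ A.attrInf C i) (ho : A.owner s = i) (ht : A.edge s t) :
    t ∉ A.attrInf C i := by
  rintro ⟨k, hk⟩
  exact hs ⟨k + 1, Set.mem_union_right _ (by
    simp only [Set.mem_setOf_eq, ho, if_true]
    exact ⟨t, ht, hk⟩)⟩

lemma trap_opp [Fintype S] {A : Arena S} {C : Set S} {i : Bool} {s : S}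
    (hs : s ∉ A.attrInf C i) (ho : ¬ A.owner s = i) :
    ∃ t, A.edge s t ∧ t ∉ A.attrInf C i := by
  by_contra hcon
  push_neg at hcon
  apply hs
  refine ⟨Finset.univ.sup (A.rank C i) + 1, Set.mem_union_right _ ?_⟩
  simp only [Set.mem_setOf_eq, ho, if_false]
  intro t ht
  exact A.attr_mono C i (Finset.le_sup (Finset.mem_univ t)) (mem_attr_rank (hcon t ht))

lemma attr_stab_of_eq {A : Arena S} {C : Set S} {i : Bool} {k : ℕ}
    (h : A.attr C i k = A.attr C i (k + 1)) :
    ∀ m, k ≤ m → A.attr C i m = A.attr C i k := by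
  intro m hm
  induction hm with
  | refl => rfl
  | step hm ih => rw [attr_succ_def, ih, ← attr_succ_def, ← h]

lemma exists_stab [Fintype S] (A : Arena S) (C : Set S) (i : Bool) :
    ∃ j ≤ Fintype.card S, A.attr C i j = A.attr C i (j + 1) := by
  by_contra hcon
  push_neg at hcon
  have key : ∀ j, j ≤ Fintype.card S + 1 → j ≤ (A.attr C i j).ncard := by
    intro j hj
    induction j with
    | zero => simp
    | succ j ih =>
      have h1 : A.attr C i j ⊂ A.attr C i (j + 1) :=
        (A.attr_le_succ C i j).ssubset_of_ne (hcon j (by omega))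
      have h2 := Set.ncard_lt_ncard h1 (Set.toFinite _)
      have h3 := ih (by omega)
      omega
  have h2 := key (Fintype.card S + 1) le_rfl
  have h3 : (A.attr C i (Fintype.card S + 1)).ncard ≤ Fintype.card S := by
    have := Set.ncard_le_ncard (Set.subset_univ (A.attr C i (Fintype.card S + 1)))
      (Set.toFinite _)
    simpa [Set.ncard_univ, Nat.card_eq_fintype_card] using this
  omega

lemma mem_attr_card [Fintype S] {A : Arena S} {C : Set S} {i : Bool} {s : S}
    (h : s ∈ A.attrInf C i) : s ∈ A.attr C i (Fintype.card S) := by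
  obtain ⟨k, hk⟩ := h
  obtain ⟨j, hj, hstab⟩ := A.exists_stab C i
  rcases le_total k (Fintype.card S) with h' | h'
  · exact A.attr_mono C i h' hk
  · have heq : A.attr C i k = A.attr C i j := attr_stab_of_eq hstab k (by omega)
    exact A.attr_mono C i hj (heq ▸ hk)

lemma cur_zero (A : Arena S) (σ : Bool → Strat S) : A.cur σ 0 = A.init := rfl

lemma cur_succ (A : Arena S) (σ : Bool → Strat S) (n : ℕ) :
    A.cur σ (n + 1) = σ (A.owner (A.cur σ n)) (A.outList σ n) := by
  simp [cur, outList, List.getLastD_concat]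

lemma outList_length (A : Arena S) (σ : Bool → Strat S) (n : ℕ) :
    (A.outList σ n).length = n + 1 := by
  induction n with
  | zero => rfl
  | succ n ih => simp [outList, ih]

lemma pathWeight_le {M : ℕ} {w : S → S → ℕ} (hM : ∀ s t, w s t ≤ M) (l : List S) :
    pathWeight w l ≤ (l.length - 1) * M := by
  have h1 := List.sum_le_card_nsmul ((l.zip l.tail).map fun p => w p.1 p.2) M (by
    intro x hx
    simp only [List.mem_map] at hx
    obtain ⟨p, _, rfl⟩ := hx
    exact hM p.1 p.2)
  calc pathWeight w l ≤ ((l.zip l.tail).map fun p => w p.1 p.2).length • M := h1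
    _ ≤ (l.length - 1) * M := by
        simp only [List.length_map, List.length_zip, List.length_tail, smul_eq_mul]
        have : min l.length (l.length - 1) = l.length - 1 := min_eq_right (Nat.sub_le _ _)
        rw [this]

lemma attrStrat_mem {A : Arena S} {C : Set S} {i : Bool}
    (d : ∀ s : S, ∃ t, A.edge s t) (l : List S)
    (h : ∃ t, A.edge (l.getLastD A.init) t ∧
      t ∈ A.attr C i (A.rank C i (l.getLastD A.init) - 1)) :
    A.attrStrat C i d l ∈ A.attr C i (A.rank C i (l.getLastD A.init) - 1) := by
  rw [attrStrat, dif_pos h]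
  exact h.choose_spec.2

lemma reach [Fintype S] {A : Arena S} {C : Set S} {i : Bool}
    (d : ∀ s : S, ∃ t, A.edge s t) (hinit : A.init ∈ A.attrInf C i)
    (σo : Strat S) (hσo : A.Valid σo) :
    ∃ n ≤ Fintype.card S, A.cur (pairFor i (A.attrStrat C i d) σo) n ∈ C := by
  set σp := pairFor i (A.attrStrat C i d) σo with hσp
  have inv : ∀ n, (∃ m ≤ n, A.cur σp m ∈ C) ∨
      (A.cur σp n ∈ A.attrInf C i ∧ A.rank C i (A.cur σp n) + n ≤ A.rank C i A.init) := by
    intro n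
    induction n with
    | zero =>
      refine Or.inr ⟨?_, ?_⟩
      · rw [cur_zero]; exact hinit
      · rw [cur_zero]; omega
    | succ n ih =>
      rcases ih with ⟨m, hm, hc⟩ | ⟨hin, hr⟩
      · exact Or.inl ⟨m, by omega, hc⟩
      by_cases hC : A.cur σp n ∈ C
      · exact Or.inl ⟨n, by omega, hC⟩
      have h0 : A.rank C i (A.cur σp n) ≠ 0 := by
        intro h
        apply hC
        have hmem := mem_attr_rank hin
        rwa [h] at hmem
      have hlast : (A.outList σp n).getLastD A.init = A.cur σp n := rfl
      have hnext : A.cur σp (n + 1) ∈ A.attr C i (A.rank C i (A.cur σp n) - 1) := by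
        rw [cur_succ, hσp]
        by_cases ho : A.owner (A.cur σp n) = i
        · have hstep := step_own hin h0 ho
          simp only [pairFor]
          rw [if_pos ho]
          exact attrStrat_mem d _ hstep
        · have hstep := step_opp hin h0 ho
          simp only [pairFor]
          rw [if_neg ho]
          exact hstep _ (hσo (A.outList σp n))
      refine Or.inr ⟨⟨_, hnext⟩, ?_⟩
      have := rank_le hnext
      omega
  have hrk : A.rank C i A.init ≤ Fintype.card S := rank_le (mem_attr_card hinit)
  rcases inv (A.rank C i A.init) with ⟨m, hm, hc⟩ | ⟨hin, hr⟩
  · exact ⟨m, by omega, hc⟩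
  · refine ⟨A.rank C i A.init, hrk, ?_⟩
    have h0 : A.rank C i (A.cur σp (A.rank C i A.init)) = 0 := by omega
    have hmem := mem_attr_rank hin
    rwa [h0] at hmem



lemma spoil_mem {A : Arena S} {C : Set S} {i : Bool}
    (d : ∀ s : S, ∃ t, A.edge s t) (l : List S)
    (h : ∃ t, A.edge (l.getLastD A.init) t ∧ t ∉ A.attrInf C i) :
    A.spoil C i d l ∉ A.attrInf C i := by
  rw [spoil, dif_pos h]
  exact h.choose_spec.2

lemma init_mem [Fintype S] {A : Arena S} {C : Set S} {i : Bool}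
    (d : ∀ s : S, ∃ t, A.edge s t) (σ : Strat S) (hv : A.Valid σ)
    (hw : A.Winning C i σ) : A.init ∈ A.attrInf C i := by
  by_contra hni
  obtain ⟨n, hn⟩ := hw (A.spoil C i d) (A.spoil_valid C i d)
  set σp := pairFor i σ (A.spoil C i d) with hσp
  have inv : ∀ n, A.cur σp n ∉ A.attrInf C i := by
    intro n
    induction n with
    | zero => rw [cur_zero]; exact hni
    | succ n ih =>
      rw [cur_succ, hσp]
      by_cases ho : A.owner (A.cur σp n) = i
      · simp only [pairFor]
        rw [if_pos ho]
        exact trap_own ih ho (hv (A.outList σp n))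
      · simp only [pairFor]
        rw [if_neg ho]
        exact spoil_mem d _ (trap_opp ih ho)
  exact inv n ⟨0, hn⟩


lemma util_le [Fintype S] {A : Arena S} {C : Set S} {i : Bool} {w : S → S → ℕ} {M : ℕ}
    (hM : ∀ s t, w s t ≤ M) (d : ∀ s : S, ∃ t, A.edge s t)
    (hinit : A.init ∈ A.attrInf C i) (σo : Strat S) (hσo : A.Valid σo) :
    A.util w C (pairFor i (A.attrStrat C i d) σo) ≤ ((M * Fintype.card S : ℕ) : ℕ∞) := by
  classical
  obtain ⟨n, hn, hC⟩ := reach d hinit σo hσo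
  have hex : ∃ m, A.cur (pairFor i (A.attrStrat C i d) σo) m ∈ C := ⟨n, hC⟩
  have hfv : A.firstVisit C (pairFor i (A.attrStrat C i d) σo) (Nat.find hex) :=
    ⟨Nat.find_spec hex, fun m hm => Nat.find_min hex hm⟩
  rw [util]
  refine le_trans (iInf₂_le (Nat.find hex) hfv) ?_
  rw [Nat.cast_le]
  have h1 := pathWeight_le hM (A.outList (pairFor i (A.attrStrat C i d) σo) (Nat.find hex))
  rw [outList_length] at h1
  have h2 : Nat.find hex ≤ Fintype.card S := le_trans (Nat.find_min' hex hC) hn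
  calc pathWeight w (A.outList (pairFor i (A.attrStrat C i d) σo) (Nat.find hex))
      ≤ (Nat.find hex + 1 - 1) * M := h1
    _ = Nat.find hex * M := by rw [Nat.add_sub_cancel]
    _ ≤ Fintype.card S * M := Nat.mul_le_mul_right M h2
    _ = M * Fintype.card S := Nat.mul_comm _ _

end Arena

/-- If Player `i` has a winning strategy, her minimal regret is
at most `M·|S|`. -/
theorem regret_le_of_winning {S : Type} [Fintype S] (A : Arena S)
    (w : S → S → ℕ) (M : ℕ) (hM : ∀ s t, w s t ≤ M) (C : Set S) (i : Bool)
    (hwin : ∃ σ : Strat S, A.Valid σ ∧ A.Winning C i σ) :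
    A.regMin w C i ≤ (M * Fintype.card S : ℕ) := by
  classical
  obtain ⟨σ, hσv, hσw⟩ := hwin
  have d : ∀ s : S, ∃ t, A.edge s t := fun s => ⟨σ [s], hσv [s]⟩
  have hinit : A.init ∈ A.attrInf C i := Arena.init_mem d σ hσv hσw
  rw [Arena.regMin]
  refine le_trans (iInf₂_le (A.attrStrat C i d) (A.attrStrat_valid C i d)) ?_
  rw [Arena.regOf]
  refine iSup₂_le fun σo hσo => ?_
  have hu := Arena.util_le hM d hinit σo hσo
  have hne : A.util w C (Arena.pairFor i (A.attrStrat C i d) σo) ≠ ⊤ := by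
    intro h
    rw [h] at hu
    exact (ENat.coe_ne_top _) (top_le_iff.mp hu)
  rw [regPairVal, if_neg hne]
  exact le_trans tsub_le_self hu
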